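/- Over the ring R = k[x_1,x_2,y_1,y_2,z]/(x_1y_1+x_2y_2-z(1-z)), the 4×4 matrix M_3 with rows (-2z+1, -2x_2, 0, 4x_1), (-2y_2, 2z-1, -4x_1, 0), (0, -y_1, -2z+1, -2y_2), (y_1, 0, -2x_2, 2z-1) is symplectic with respect to J_2 = ((0,I_2),(-I_2,0)): M_3^T J_2 M_3 = J_2. -/
import Mathlib


set_option synthInstance.maxHeartbeats 1000000
set_option maxHeartbeats 1000000

open MvPolynomial

/-- `R = k[x₁,x₂,y₁,y₂,z]/(x₁y₁ + x₂y₂ - z(1-z))`, the coordinate ring of `Q₄`. -/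
abbrev Q4Ring (k : Type*) [CommRing k] : Type _ :=
  MvPolynomial (Fin 5) k ⧸
    Ideal.span {(X 0 * X 2 + X 1 * X 3 - X 4 * (1 - X 4) : MvPolynomial (Fin 5) k)}

noncomputable def x1 {k : Type*} [CommRing k] : Q4Ring k := Ideal.Quotient.mk _ (X 0)
noncomputable def x2 {k : Type*} [CommRing k] : Q4Ring k := Ideal.Quotient.mk _ (X 1)
noncomputable def y1 {k : Type*} [CommRing k] : Q4Ring k := Ideal.Quotient.mk _ (X 2)
noncomputable def y2 {k : Type*} [CommRing k] : Q4Ring k := Ideal.Quotient.mk _ (X 3)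
noncomputable def z {k : Type*} [CommRing k] : Q4Ring k := Ideal.Quotient.mk _ (X 4)

/-- The `4 × 4` matrix `M₃` of the symplectic reduction. -/
noncomputable def M3Mat (k : Type*) [CommRing k] : Matrix (Fin 4) (Fin 4) (Q4Ring k) :=
  !![-2*z+1, -2*x2, 0, 4*x1;
     -2*y2, 2*z-1, -4*x1, 0;
     0, -y1, -2*z+1, -2*y2;
     y1, 0, -2*x2, 2*z-1]

/-- The symplectic form `J₂ = ((0, I₂), (-I₂, 0))`. -/
noncomputable def J2Mat (k : Type*) [CommRing k] : Matrix (Fin 4) (Fin 4) (Q4Ring k) :=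
  !![0, 0, 1, 0;
     0, 0, 0, 1;
     -1, 0, 0, 0;
     0, -1, 0, 0]

/-- `M₃` is symplectic with respect to `J₂`. -/
theorem M3Mat_symplectic (k : Type*) [CommRing k] :
    (M3Mat k).transpose * J2Mat k * M3Mat k = J2Mat k := by
  have h : (x1*y1 + x2*y2 - z*(1-z) : Q4Ring k) = 0 := by
    have h0 : (Ideal.Quotient.mk _ (X 0 * X 2 + X 1 * X 3 - X 4 * (1 - X 4) : MvPolynomial (Fin 5) k)
        : Q4Ring k) = 0 :=
      Ideal.Quotient.eq_zero_iff_mem.mpr (Ideal.subset_span rfl)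
    rw [map_sub, map_add, map_mul, map_mul, map_mul, map_sub, map_one] at h0
    simpa [x1, x2, y1, y2, z] using h0
  ext i j
  fin_cases i <;> fin_cases j <;>
    simp [M3Mat, J2Mat, Matrix.mul_apply, Matrix.transpose_apply, Fin.sum_univ_succ, Matrix.vecHead, Matrix.vecTail] <;>
    first
      | linear_combination (4 : Q4Ring k) * h
      | linear_combination (-4 : Q4Ring k) * h
      | ring
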